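/- For all integers n, m > 1, F_{n,m} ≥ F_n·F_m / (F_n + F_m + 1), where F_{n,m} is the maximum of F(A) over all binary arrays A of size n×m and F_n := F_{n,1}. -/

import Mathlib

open scoped BigOperators

noncomputable section

/-- `A` is an array of size `n × m`: entries vanish outside `[0,n) × [0,m)`. -/
def IsArray (n m : ℤ) (A : ℤ × ℤ → ℝ) : Prop :=
  ∀ i j : ℤ, A (i, j) ≠ 0 → 0 ≤ i ∧ i < n ∧ 0 ≤ j ∧ j < m

/-- `A` is a binary array of size `n × m`. -/
def IsBinaryArray (n m : ℤ) (A : ℤ × ℤ → ℝ) : Prop :=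
  IsArray n m A ∧
    ∀ i j : ℤ, 0 ≤ i → i < n → 0 ≤ j → j < m → A (i, j) = 1 ∨ A (i, j) = -1

/-- Aperiodic autocorrelation of a two-dimensional array at displacement `(u, v)`. -/
def autocorr (A : ℤ × ℤ → ℝ) (u v : ℤ) : ℝ :=
  ∑ᶠ i : ℤ, ∑ᶠ j : ℤ, A (i, j) * A (i + u, j + v)

/-- Merit factor of an array of size `n × m`. -/
def meritFactor (n m : ℤ) (A : ℤ × ℤ → ℝ) : ℝ :=
  ((n : ℝ) * m) ^ 2 / ∑ᶠ uv ∈ {x : ℤ × ℤ | x ≠ (0, 0)}, (autocorr A uv.1 uv.2) ^ 2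

/-- `a` is a sequence of length `n`: entries vanish outside `[0,n)`. -/
def IsSeq (n : ℤ) (a : ℤ → ℝ) : Prop := ∀ i : ℤ, a i ≠ 0 → 0 ≤ i ∧ i < n

/-- `a` is a binary sequence of length `n`. -/
def IsBinarySeq (n : ℤ) (a : ℤ → ℝ) : Prop :=
  IsSeq n a ∧ ∀ i : ℤ, 0 ≤ i → i < n → a i = 1 ∨ a i = -1

/-- Aperiodic autocorrelation of a sequence at displacement `u`. -/
def seqAutocorr (a : ℤ → ℝ) (u : ℤ) : ℝ := ∑ᶠ i : ℤ, a i * a (i + u)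

/-- Merit factor of a sequence of length `n`. -/
def seqMeritFactor (n : ℤ) (a : ℤ → ℝ) : ℝ :=
  (n : ℝ) ^ 2 / ∑ᶠ u ∈ {u : ℤ | u ≠ 0}, (seqAutocorr a u) ^ 2

/-- Rotation of a sequence of length `n` by a real number `s`. -/
def seqRotate (n : ℤ) (s : ℝ) (a : ℤ → ℝ) : ℤ → ℝ :=
  fun i => if 0 ≤ i ∧ i < n then a ((i + ⌊(n : ℝ) * s⌋) % n) else 0

/-- Rotation of an array of size `n × m` by real numbers `s` and `t`. -/
def arrRotate (n m : ℤ) (s t : ℝ) (A : ℤ × ℤ → ℝ) : ℤ × ℤ → ℝ :=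
  fun x => if 0 ≤ x.1 ∧ x.1 < n ∧ 0 ≤ x.2 ∧ x.2 < m then
    A ((x.1 + ⌊(n : ℝ) * s⌋) % n, (x.2 + ⌊(m : ℝ) * t⌋) % m) else 0

/-- Generating function of an array of size `n × m`, evaluated at `(x, y)`. -/
def genFun (n m : ℕ) (A : ℤ × ℤ → ℝ) (x y : ℂ) : ℂ :=
  ∑ i ∈ Finset.range n, ∑ j ∈ Finset.range m, (A (i, j) : ℂ) * x ^ i * y ^ j

/-- `zeta d = e^{iπ/d}`, a primitive `(2d)`-th root of unity. -/
def zeta (d : ℕ) : ℂ := Complex.exp (Real.pi * Complex.I / d)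

/-- `eps p j = e^{2πij/p}`, a `p`-th root of unity. -/
def eps (p : ℕ) (j : ℤ) : ℂ := Complex.exp (2 * Real.pi * Complex.I * j / p)

/-- The Legendre sequence of length `p` (for `p` an odd prime). -/
def legendreSeq (p : ℕ) : ℤ → ℝ :=
  fun i => if 0 ≤ i ∧ i < p then (if i = 0 then 1 else (jacobiSym i p : ℝ)) else 0

/-- The ternary Legendre sequence of length `p` (for `p` an odd prime). -/
def ternaryLegendreSeq (p : ℕ) : ℤ → ℝ :=
  fun i => if 0 ≤ i ∧ i < p then (jacobiSym i p : ℝ) else 0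

/-- `F_{n,m}`: the maximum merit factor over all binary arrays of size `n × m`. -/
def maxMeritFactor (n m : ℤ) : ℝ :=
  sSup {x : ℝ | ∃ A : ℤ × ℤ → ℝ, IsBinaryArray n m A ∧ x = meritFactor n m A}

/-!
For binary sequences `a`, `b` of lengths `n`, `m`, the outer product array `A (i, j) = a i * b j`
has autocorrelations `C_A (u, v) = C_a u * C_b v`. With `E_a = ∑_{u ≠ 0} C_a(u)²`, so that
`F(a) = n² / E_a`, the off-peak energy of `A` is `(n² + E_a) (m² + E_b) - n² m²`, and this turns
`F(A)` into `F(a) F(b) / (F(a) + F(b) + 1)`. An `n × 1` array is the outer product of its column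
with the length-one sequence `1`, so `F_{n,1}` is the merit factor of an optimal sequence; choosing
`a`, `b` optimal (maxima exist: there are finitely many binary arrays) gives the bound.
The end correlation `C_a (n - 1) = ±1` makes `E_a` positive, so no division by zero occurs.
-/

open Function

lemma IsBinarySeq.sq_eq_one {n : ℤ} {a : ℤ → ℝ} (ha : IsBinarySeq n a) {i : ℤ} (h₀ : 0 ≤ i)
    (hi : i < n) : a i ^ 2 = 1 := by
  rcases ha.2 i h₀ hi with h | h <;> simp [h]

lemma IsSeq.support_seqAutocorr_subset {n : ℤ} {a : ℤ → ℝ} (ha : IsSeq n a) :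
    support (seqAutocorr a) ⊆ Set.Ioo (-n) n := by
  intro u hu
  obtain ⟨i, hi⟩ : ∃ i, a i * a (i + u) ≠ 0 := by
    by_contra! h
    exact hu (finsum_eq_zero_of_forall_eq_zero h)
  have h₁ := ha i (left_ne_zero_of_mul hi)
  have h₂ := ha (i + u) (right_ne_zero_of_mul hi)
  constructor <;> omega

lemma IsSeq.hasFiniteSupport_sq_seqAutocorr {n : ℤ} {a : ℤ → ℝ} (ha : IsSeq n a) :
    HasFiniteSupport fun u => seqAutocorr a u ^ 2 :=
  (Set.finite_Ioo (-n) n).subset <| by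
    rw [support_pow _ two_ne_zero]
    exact ha.support_seqAutocorr_subset

lemma IsBinarySeq.seqAutocorr_zero {n : ℤ} {a : ℤ → ℝ} (ha : IsBinarySeq n a) (hn : 0 ≤ n) :
    seqAutocorr a 0 = n := by
  have hsupp : support (fun i => a i * a (i + 0)) ⊆ (Finset.Ico 0 n : Finset ℤ) := fun i hi => by
    simpa using ha.1 i (left_ne_zero_of_mul hi)
  rw [seqAutocorr, finsum_eq_sum_of_support_subset _ hsupp]
  calc ∑ i ∈ Finset.Ico 0 n, a i * a (i + 0) = ∑ i ∈ Finset.Ico 0 n, (1 : ℝ) :=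
        Finset.sum_congr rfl fun i hi => by
          rw [Finset.mem_Ico] at hi
          rw [add_zero, ← sq, ha.sq_eq_one hi.1 hi.2]
    _ = n := by
      rw [Finset.sum_const, Int.card_Ico, sub_zero, nsmul_one]
      exact_mod_cast Int.toNat_of_nonneg hn

lemma IsSeq.seqAutocorr_sub_one {n : ℤ} {a : ℤ → ℝ} (ha : IsSeq n a) :
    seqAutocorr a (n - 1) = a 0 * a (n - 1) := by
  rw [seqAutocorr, finsum_eq_single _ 0 fun i hi => ?_, zero_add]
  by_contra h
  have h₁ := ha i (left_ne_zero_of_mul h)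
  have h₂ := ha _ (right_ne_zero_of_mul h)
  omega

def offPeakEnergy (a : ℤ → ℝ) : ℝ := ∑ᶠ u ∈ {u : ℤ | u ≠ 0}, seqAutocorr a u ^ 2

lemma IsSeq.sq_seqAutocorr_zero_add_offPeakEnergy {n : ℤ} {a : ℤ → ℝ} (ha : IsSeq n a) :
    seqAutocorr a 0 ^ 2 + offPeakEnergy a = ∑ᶠ u, seqAutocorr a u ^ 2 :=
  add_finsum_cond_ne 0 ha.hasFiniteSupport_sq_seqAutocorr

lemma IsSeq.sq_seqAutocorr_le_offPeakEnergy {n : ℤ} {a : ℤ → ℝ} (ha : IsSeq n a) {u : ℤ}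
    (hu : u ≠ 0) : seqAutocorr a u ^ 2 ≤ offPeakEnergy a := by
  rw [offPeakEnergy, finsum_mem_def]
  have hfin : HasFiniteSupport ({u : ℤ | u ≠ 0}.indicator fun u => seqAutocorr a u ^ 2) :=
    ha.hasFiniteSupport_sq_seqAutocorr.subset <| by
      rw [Set.support_indicator]; exact Set.inter_subset_right
  simpa [Set.indicator_of_mem (show u ∈ {u : ℤ | u ≠ 0} from hu)] using
    single_le_finsum u hfin (Set.indicator_nonneg fun _ _ => sq_nonneg _)

lemma IsBinarySeq.one_le_offPeakEnergy {n : ℤ} {a : ℤ → ℝ} (ha : IsBinarySeq n a) (hn : 1 < n) :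
    1 ≤ offPeakEnergy a := by
  calc (1 : ℝ) = seqAutocorr a (n - 1) ^ 2 := by
        rw [ha.1.seqAutocorr_sub_one, mul_pow, ha.sq_eq_one le_rfl (by omega),
          ha.sq_eq_one (by omega) (by omega), one_mul]
    _ ≤ offPeakEnergy a := ha.1.sq_seqAutocorr_le_offPeakEnergy (by omega)

def outerArray (a b : ℤ → ℝ) : ℤ × ℤ → ℝ := fun p => a p.1 * b p.2

lemma IsBinarySeq.isBinaryArray_outerArray {n m : ℤ} {a b : ℤ → ℝ} (ha : IsBinarySeq n a)
    (hb : IsBinarySeq m b) : IsBinaryArray n m (outerArray a b) := by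
  refine ⟨fun i j h => ?_, fun i j hi₀ hi hj₀ hj => ?_⟩
  · obtain ⟨hi₀, hi⟩ := ha.1 i (left_ne_zero_of_mul h)
    exact ⟨hi₀, hi, hb.1 j (right_ne_zero_of_mul h)⟩
  · rcases ha.2 i hi₀ hi with h | h <;> rcases hb.2 j hj₀ hj with h' | h' <;>
      simp [outerArray, h, h']

lemma autocorr_outerArray (a b : ℤ → ℝ) (u v : ℤ) :
    autocorr (outerArray a b) u v = seqAutocorr a u * seqAutocorr b v := by
  rw [seqAutocorr, seqAutocorr, finsum_mul]
  refine finsum_congr fun i => ?_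
  rw [mul_finsum]
  exact finsum_congr fun j => by simp only [outerArray]; ring

lemma offPeakEnergy_outerArray {n m : ℤ} {a b : ℤ → ℝ} (ha : IsSeq n a) (hb : IsSeq m b) :
    ∑ᶠ uv ∈ {x : ℤ × ℤ | x ≠ (0, 0)}, autocorr (outerArray a b) uv.1 uv.2 ^ 2 =
      seqAutocorr a 0 ^ 2 * offPeakEnergy b + seqAutocorr b 0 ^ 2 * offPeakEnergy a +
        offPeakEnergy a * offPeakEnergy b := by
  set f := fun u => seqAutocorr a u ^ 2
  set g := fun v => seqAutocorr b v ^ 2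
  have hprod : ∀ uv : ℤ × ℤ, autocorr (outerArray a b) uv.1 uv.2 ^ 2 = f uv.1 * g uv.2 :=
    fun uv => by rw [autocorr_outerArray, mul_pow]
  have hfin : HasFiniteSupport fun uv : ℤ × ℤ => f uv.1 * g uv.2 :=
    (ha.hasFiniteSupport_sq_seqAutocorr.prod hb.hasFiniteSupport_sq_seqAutocorr).subset
      fun uv h => ⟨left_ne_zero_of_mul h, right_ne_zero_of_mul h⟩
  have htotal : f 0 * g 0 + ∑ᶠ uv ∈ {x : ℤ × ℤ | x ≠ (0, 0)}, f uv.1 * g uv.2 =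
      (∑ᶠ u, f u) * ∑ᶠ v, g v := by
    calc _ = ∑ᶠ uv : ℤ × ℤ, f uv.1 * g uv.2 := add_finsum_cond_ne (0, 0) hfin
      _ = _ := by rw [finsum_curry _ hfin, finsum_mul]; simp only [mul_finsum]
  simp only [hprod]
  rw [← ha.sq_seqAutocorr_zero_add_offPeakEnergy, ← hb.sq_seqAutocorr_zero_add_offPeakEnergy]
    at htotal
  linear_combination htotal

lemma meritFactor_outerArray {n m : ℤ} {a b : ℤ → ℝ} (ha : IsBinarySeq n a)
    (hb : IsBinarySeq m b) (hn : 0 ≤ n) (hm : 0 ≤ m) :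
    meritFactor n m (outerArray a b) = ((n : ℝ) * m) ^ 2 /
      ((n : ℝ) ^ 2 * offPeakEnergy b + (m : ℝ) ^ 2 * offPeakEnergy a +
        offPeakEnergy a * offPeakEnergy b) := by
  rw [meritFactor, offPeakEnergy_outerArray ha.1 hb.1, ha.seqAutocorr_zero hn,
    hb.seqAutocorr_zero hm]

lemma isBinarySeq_single_one : IsBinarySeq 1 (Pi.single 0 1) := by
  refine ⟨fun i hi => ?_, fun i hi₀ hi => ?_⟩
  · obtain rfl : i = 0 := by simpa [Pi.single_apply] using hi
    simp
  · obtain rfl : i = 0 := by omega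
    simp

lemma IsSeq.offPeakEnergy_eq_zero {a : ℤ → ℝ} (ha : IsSeq 1 a) : offPeakEnergy a = 0 := by
  refine finsum_mem_eq_zero_of_forall_eq_zero fun u hu => ?_
  have hu₀ : u ∉ support (seqAutocorr a) := fun h => by
    have := ha.support_seqAutocorr_subset h
    simp only [Set.mem_Ioo] at this
    exact hu (by omega)
  simpa using hu₀

lemma IsBinaryArray.isBinarySeq_column {n : ℤ} {A : ℤ × ℤ → ℝ} (hA : IsBinaryArray n 1 A) :
    IsBinarySeq n fun i => A (i, 0) :=
  ⟨fun i hi => ⟨(hA.1 i 0 hi).1, (hA.1 i 0 hi).2.1⟩,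
    fun i hi₀ hi => hA.2 i 0 hi₀ hi le_rfl one_pos⟩

lemma IsBinaryArray.eq_outerArray_column {n : ℤ} {A : ℤ × ℤ → ℝ} (hA : IsBinaryArray n 1 A) :
    A = outerArray (fun i => A (i, 0)) (Pi.single 0 1) := by
  ext ⟨i, j⟩
  by_cases hj : j = 0
  · simp [outerArray, hj]
  · have : A (i, j) = 0 := by
      by_contra h
      have := hA.1 i j h
      omega
    simp [outerArray, hj, this]

lemma IsBinaryArray.meritFactor_eq_div_offPeakEnergy {n : ℤ} {A : ℤ × ℤ → ℝ}
    (hA : IsBinaryArray n 1 A) (hn : 0 ≤ n) :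
    meritFactor n 1 A = (n : ℝ) ^ 2 / offPeakEnergy fun i => A (i, 0) := by
  conv_lhs => rw [hA.eq_outerArray_column]
  rw [meritFactor_outerArray hA.isBinarySeq_column isBinarySeq_single_one hn zero_le_one,
    isBinarySeq_single_one.1.offPeakEnergy_eq_zero]
  simp

lemma finite_setOf_isBinaryArray (n m : ℤ) : {A : ℤ × ℤ → ℝ | IsBinaryArray n m A}.Finite := by
  let box : Set (ℤ × ℤ) := Set.Ico 0 n ×ˢ Set.Ico 0 m
  have : Finite box := (Set.finite_Ico 0 n).prod (Set.finite_Ico 0 m)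
  refine Set.Finite.of_finite_image (f := fun A (p : box) => A p) ?_ fun A hA B hB hAB => ?_
  · refine (Set.Finite.pi (t := fun _ => {1, -1}) fun _ => by simp).subset ?_
    rintro _ ⟨A, hA, rfl⟩ ⟨⟨i, j⟩, ⟨hi₀, hi⟩, hj₀, hj⟩ -
    exact hA.2 i j hi₀ hi hj₀ hj
  · ext ⟨i, j⟩
    by_cases hij : (i, j) ∈ box
    · exact congrFun hAB ⟨(i, j), hij⟩
    · have vanish : ∀ C : ℤ × ℤ → ℝ, IsArray n m C → C (i, j) = 0 := fun C hC => by
        by_contra h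
        obtain ⟨hi₀, hi, hj₀, hj⟩ := hC i j h
        exact hij ⟨⟨hi₀, hi⟩, hj₀, hj⟩
      rw [vanish A hA.1, vanish B hB.1]

def meritFactors (n m : ℤ) : Set ℝ :=
  {x : ℝ | ∃ A : ℤ × ℤ → ℝ, IsBinaryArray n m A ∧ x = meritFactor n m A}

lemma finite_meritFactors (n m : ℤ) : (meritFactors n m).Finite := by
  refine ((finite_setOf_isBinaryArray n m).image (meritFactor n m)).subset ?_
  rintro _ ⟨A, hA, rfl⟩
  exact ⟨A, hA, rfl⟩

lemma exists_meritFactor_eq_maxMeritFactor (n m : ℤ) :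
    ∃ A, IsBinaryArray n m A ∧ meritFactor n m A = maxMeritFactor n m := by
  let ones : ℤ × ℤ → ℝ := (Set.Ico 0 n ×ˢ Set.Ico 0 m).indicator 1
  have hones : IsBinaryArray n m ones := by
    refine ⟨fun i j h => ?_, fun i j hi₀ hi hj₀ hj => ?_⟩
    · simpa [ones, and_assoc] using Set.mem_of_indicator_ne_zero h
    · simp [ones, hi₀, hi, hj₀, hj]
  obtain ⟨A, hA, h⟩ := (show (meritFactors n m).Nonempty from ⟨_, ones, hones, rfl⟩).csSup_mem
    (finite_meritFactors n m)
  exact ⟨A, hA, h.symm⟩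

lemma IsBinaryArray.meritFactor_le_maxMeritFactor {n m : ℤ} {A : ℤ × ℤ → ℝ}
    (hA : IsBinaryArray n m A) : meritFactor n m A ≤ maxMeritFactor n m :=
  le_csSup (finite_meritFactors n m).bddAbove ⟨A, hA, rfl⟩

/-- For all integers `n, m > 1`, `F_{n,m} ≥ F_n F_m / (F_n + F_m + 1)`,
where `F_n := F_{n,1}`. -/
theorem stmt3 (n m : ℤ) (hn : 1 < n) (hm : 1 < m) :
    maxMeritFactor n m ≥
      maxMeritFactor n 1 * maxMeritFactor m 1 /
        (maxMeritFactor n 1 + maxMeritFactor m 1 + 1) := by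
  obtain ⟨A, hA, hFA⟩ := exists_meritFactor_eq_maxMeritFactor n 1
  obtain ⟨B, hB, hFB⟩ := exists_meritFactor_eq_maxMeritFactor m 1
  have ha := hA.isBinarySeq_column
  have hb := hB.isBinarySeq_column
  have hEa := ha.one_le_offPeakEnergy hn
  have hEb := hb.one_le_offPeakEnergy hm
  rw [← hFA, ← hFB, hA.meritFactor_eq_div_offPeakEnergy (by omega),
    hB.meritFactor_eq_div_offPeakEnergy (by omega)]
  calc _ = meritFactor n m (outerArray _ _) := by
        rw [meritFactor_outerArray ha hb (by omega) (by omega)]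
        field_simp
    _ ≤ maxMeritFactor n m := (ha.isBinaryArray_outerArray hb).meritFactor_le_maxMeritFactor
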